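/- Definition 4 satisfies the Syntactic Dummy property: for a program p over variables 𝐗 in which the variable X does not occur, p viewed as a program over variables 𝐗 has proxy use of Z iff p viewed as a program over variables 𝐗, X has proxy use of Z. -/
import Mathlib


namespace UsePrivacy

/-- Probability of an event under a discrete distribution. -/
noncomputable def pr {Ω : Type*} (μ : PMF Ω) (s : Set Ω) : ℝ :=
  (μ.toOuterMeasure s).toReal

/-- `X` is a perfect proxy for `Z`. -/
def PerfectProxy {Ω α β : Type*} (μ : PMF Ω) (X : Ω → α) (Z : Ω → β) : Prop :=
  ∃ (f : α → β) (g : β → α),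
    pr μ {ω | Z ω = f (X ω)} = 1 ∧ pr μ {ω | g (Z ω) = X ω} = 1

/-! The expression language: programs `p = λ x₁,…,xₙ. e` built from real constants,
variables, arithmetic operations, Boolean operations, relational operations and
if-then-else. -/

mutual
inductive AExp : ℕ → Type
  | const {n : ℕ} : ℝ → AExp n
  | var {n : ℕ} : Fin n → AExp n
  | add {n : ℕ} : AExp n → AExp n → AExp n
  | mul {n : ℕ} : AExp n → AExp n → AExp n
  | ite {n : ℕ} : BExp n → AExp n → AExp n → AExp n
inductive BExp : ℕ → Type
  | tt {n : ℕ} : BExp n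
  | not {n : ℕ} : BExp n → BExp n
  | and {n : ℕ} : BExp n → BExp n → BExp n
  | le {n : ℕ} : AExp n → AExp n → BExp n
end

noncomputable section

-- `⟦p⟧`: the denotation (the function computed by the program).
mutual
def AExp.eval : {n : ℕ} → AExp n → (Fin n → ℝ) → ℝ
  | _, .const c, _ => c
  | _, .var i, v => v i
  | _, .add a b, v => a.eval v + b.eval v
  | _, .mul a b, v => a.eval v * b.eval v
  | _, .ite c a b, v => if c.eval v then a.eval v else b.eval v
def BExp.eval : {n : ℕ} → BExp n → (Fin n → ℝ) → Bool
  | _, .tt, _ => true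
  | _, .not b, v => ! b.eval v
  | _, .and a b, v => a.eval v && b.eval v
  | _, .le a b, v => decide (a.eval v ≤ b.eval v)
end

-- `[q/u]p`: substitution of the program `q` for the fresh (last) variable `u` of `p`.
mutual
def AExp.subst : {n : ℕ} → AExp (n + 1) → AExp n → AExp n
  | _, .const c, _ => .const c
  | _, .var i, q => Fin.lastCases q (fun j => AExp.var j) i
  | _, .add a b, q => .add (a.subst q) (b.subst q)
  | _, .mul a b, q => .mul (a.subst q) (b.subst q)
  | _, .ite c a b, q => .ite (c.subst q) (a.subst q) (b.subst q)
def BExp.subst : {n : ℕ} → BExp (n + 1) → AExp n → BExp n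
  | _, .tt, _ => .tt
  | _, .not b, q => .not (b.subst q)
  | _, .and a b, q => .and (a.subst q) (b.subst q)
  | _, .le a b, q => .le (a.subst q) (b.subst q)
end

/-- The random variable `⟦p⟧(𝐗)` obtained by evaluating program `p` on the tuple of
input random variables `𝐗`. -/
def evalRV {Ω : Type*} {n : ℕ} (X : Fin n → Ω → ℝ) (p : AExp n) : Ω → ℝ :=
  fun ω => p.eval (fun i => X i ω)

/-- The fresh (last) variable `u` is influential in `p₂`: there exist values `x, u₁, u₂`
with `⟦p₂⟧(x, u₁) ≠ ⟦p₂⟧(x, u₂)`. -/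
def InfluentialLast {n : ℕ} (p₂ : AExp (n + 1)) : Prop :=
  ∃ (x : Fin n → ℝ) (u₁ u₂ : ℝ), p₂.eval (Fin.snoc x u₁) ≠ p₂.eval (Fin.snoc x u₂)

/-- Definition 4: `p` has proxy use of `Z` iff there is an influential decomposition
`(p₁, u, p₂)` of `p` such that `⟦p₁⟧(𝐗)` is a perfect proxy for `Z`. -/
def ProxyUse {Ω 𝒵 : Type*} {n : ℕ} (μ : PMF Ω) (X : Fin n → Ω → ℝ)
    (p : AExp n) (Z : Ω → 𝒵) : Prop :=
  ∃ (p₁ : AExp n) (p₂ : AExp (n + 1)),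
    p₂.subst p₁ = p ∧ InfluentialLast p₂ ∧ PerfectProxy μ (evalRV X p₁) Z

end

noncomputable section

-- Viewing a program over variables `𝐗` as a program over variables `𝐗, X`
-- (the added variable `X` does not occur in the program).
mutual
def AExp.weaken : {n : ℕ} → AExp n → AExp (n + 1)
  | _, .const c => .const c
  | _, .var i => .var i.castSucc
  | _, .add a b => .add a.weaken b.weaken
  | _, .mul a b => .mul a.weaken b.weaken
  | _, .ite c a b => .ite c.weaken a.weaken b.weaken
def BExp.weaken : {n : ℕ} → BExp n → BExp (n + 1)
  | _, .tt => .tt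
  | _, .not b => .not b.weaken
  | _, .and a b => .and a.weaken b.weaken
  | _, .le a b => .le a.weaken b.weaken
end

end

noncomputable section SyntacticDummyAux

open Fin

/-- Swap the last two indices of `Fin (n+2)`. -/
def swp (n : ℕ) : Fin (n + 2) → Fin (n + 2) :=
  Fin.lastCases ((Fin.last n).castSucc)
    (Fin.lastCases (Fin.last (n + 1)) (fun k => k.castSucc.castSucc))

@[simp] theorem swp_last (n : ℕ) : swp n (Fin.last (n + 1)) = (Fin.last n).castSucc := by
  simp [swp]

@[simp] theorem swp_castSucc_last (n : ℕ) :
    swp n ((Fin.last n).castSucc) = Fin.last (n + 1) := by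
  simp [swp]

@[simp] theorem swp_castSucc_castSucc {n : ℕ} (k : Fin n) :
    swp n k.castSucc.castSucc = k.castSucc.castSucc := by
  simp [swp]

mutual
def AExp.map : {n m : ℕ} → (Fin n → Fin m) → AExp n → AExp m
  | _, _, _, .const c => .const c
  | _, _, ρ, .var i => .var (ρ i)
  | _, _, ρ, .add a b => .add (a.map ρ) (b.map ρ)
  | _, _, ρ, .mul a b => .mul (a.map ρ) (b.map ρ)
  | _, _, ρ, .ite c a b => .ite (c.map ρ) (a.map ρ) (b.map ρ)
def BExp.map : {n m : ℕ} → (Fin n → Fin m) → BExp n → BExp m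
  | _, _, _, .tt => .tt
  | _, _, ρ, .not b => .not (b.map ρ)
  | _, _, ρ, .and a b => .and (a.map ρ) (b.map ρ)
  | _, _, ρ, .le a b => .le (a.map ρ) (b.map ρ)
end

mutual
def AExp.uses : {n : ℕ} → AExp n → Fin n → Prop
  | _, .const _, _ => False
  | _, .var i, j => i = j
  | _, .add a b, j => a.uses j ∨ b.uses j
  | _, .mul a b, j => a.uses j ∨ b.uses j
  | _, .ite c a b, j => c.uses j ∨ a.uses j ∨ b.uses j
def BExp.uses : {n : ℕ} → BExp n → Fin n → Prop
  | _, .tt, _ => False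
  | _, .not b, j => b.uses j
  | _, .and a b, j => a.uses j ∨ b.uses j
  | _, .le a b, j => a.uses j ∨ b.uses j
end

mutual
theorem AExp.map_eval : ∀ {n m : ℕ} (ρ : Fin n → Fin m) (e : AExp n) (v : Fin m → ℝ),
    (e.map ρ).eval v = e.eval (fun i => v (ρ i))
  | _, _, _, .const c, _ => by simp [AExp.map, BExp.map, AExp.eval, BExp.eval, AExp.subst, BExp.subst, AExp.weaken, BExp.weaken, AExp.uses, BExp.uses]
  | _, _, _, .var i, _ => by simp [AExp.map, BExp.map, AExp.eval, BExp.eval, AExp.subst, BExp.subst, AExp.weaken, BExp.weaken, AExp.uses, BExp.uses]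
  | _, _, ρ, .add a b, v => by
      simp [AExp.map, AExp.eval, AExp.map_eval ρ a v, AExp.map_eval ρ b v]
  | _, _, ρ, .mul a b, v => by
      simp [AExp.map, AExp.eval, AExp.map_eval ρ a v, AExp.map_eval ρ b v]
  | _, _, ρ, .ite c a b, v => by
      simp [AExp.map, AExp.eval, AExp.map_eval ρ a v, AExp.map_eval ρ b v,
        BExp.map_eval ρ c v]
theorem BExp.map_eval : ∀ {n m : ℕ} (ρ : Fin n → Fin m) (e : BExp n) (v : Fin m → ℝ),
    (e.map ρ).eval v = e.eval (fun i => v (ρ i))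
  | _, _, _, .tt, _ => by simp [AExp.map, BExp.map, AExp.eval, BExp.eval, AExp.subst, BExp.subst, AExp.weaken, BExp.weaken, AExp.uses, BExp.uses]
  | _, _, ρ, .not b, v => by simp [BExp.map, BExp.eval, BExp.map_eval ρ b v]
  | _, _, ρ, .and a b, v => by
      simp [BExp.map, BExp.eval, BExp.map_eval ρ a v, BExp.map_eval ρ b v]
  | _, _, ρ, .le a b, v => by
      simp [BExp.map, BExp.eval, AExp.map_eval ρ a v, AExp.map_eval ρ b v]
end

mutual
theorem AExp.weaken_eval : ∀ {n : ℕ} (e : AExp n) (v : Fin (n + 1) → ℝ),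
    e.weaken.eval v = e.eval (fun i => v i.castSucc)
  | _, .const c, _ => by simp [AExp.map, BExp.map, AExp.eval, BExp.eval, AExp.subst, BExp.subst, AExp.weaken, BExp.weaken, AExp.uses, BExp.uses]
  | _, .var i, _ => by simp [AExp.map, BExp.map, AExp.eval, BExp.eval, AExp.subst, BExp.subst, AExp.weaken, BExp.weaken, AExp.uses, BExp.uses]
  | _, .add a b, v => by
      simp [AExp.weaken, AExp.eval, AExp.weaken_eval a v, AExp.weaken_eval b v]
  | _, .mul a b, v => by
      simp [AExp.weaken, AExp.eval, AExp.weaken_eval a v, AExp.weaken_eval b v]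
  | _, .ite c a b, v => by
      simp [AExp.weaken, AExp.eval, AExp.weaken_eval a v, AExp.weaken_eval b v,
        BExp.weaken_eval c v]
theorem BExp.weaken_eval : ∀ {n : ℕ} (e : BExp n) (v : Fin (n + 1) → ℝ),
    e.weaken.eval v = e.eval (fun i => v i.castSucc)
  | _, .tt, _ => by simp [AExp.map, BExp.map, AExp.eval, BExp.eval, AExp.subst, BExp.subst, AExp.weaken, BExp.weaken, AExp.uses, BExp.uses]
  | _, .not b, v => by simp [BExp.weaken, BExp.eval, BExp.weaken_eval b v]
  | _, .and a b, v => by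
      simp [BExp.weaken, BExp.eval, BExp.weaken_eval a v, BExp.weaken_eval b v]
  | _, .le a b, v => by
      simp [BExp.weaken, BExp.eval, AExp.weaken_eval a v, AExp.weaken_eval b v]
end

mutual
theorem AExp.subst_eval : ∀ {n : ℕ} (e : AExp (n + 1)) (q : AExp n) (v : Fin n → ℝ),
    (e.subst q).eval v = e.eval (Fin.snoc v (q.eval v))
  | _, .const c, _, _ => by simp [AExp.map, BExp.map, AExp.eval, BExp.eval, AExp.subst, BExp.subst, AExp.weaken, BExp.weaken, AExp.uses, BExp.uses]
  | _, .var i, q, v => by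
      induction i using Fin.lastCases with
      | last => simp [AExp.subst, AExp.eval]
      | cast j => simp [AExp.subst, AExp.eval]
  | _, .add a b, q, v => by
      simp [AExp.subst, AExp.eval, AExp.subst_eval a q v, AExp.subst_eval b q v]
  | _, .mul a b, q, v => by
      simp [AExp.subst, AExp.eval, AExp.subst_eval a q v, AExp.subst_eval b q v]
  | _, .ite c a b, q, v => by
      simp [AExp.subst, AExp.eval, AExp.subst_eval a q v, AExp.subst_eval b q v,
        BExp.subst_eval c q v]
theorem BExp.subst_eval : ∀ {n : ℕ} (e : BExp (n + 1)) (q : AExp n) (v : Fin n → ℝ),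
    (e.subst q).eval v = e.eval (Fin.snoc v (q.eval v))
  | _, .tt, _, _ => by simp [AExp.map, BExp.map, AExp.eval, BExp.eval, AExp.subst, BExp.subst, AExp.weaken, BExp.weaken, AExp.uses, BExp.uses]
  | _, .not b, q, v => by simp [BExp.subst, BExp.eval, BExp.subst_eval b q v]
  | _, .and a b, q, v => by
      simp [BExp.subst, BExp.eval, BExp.subst_eval a q v, BExp.subst_eval b q v]
  | _, .le a b, q, v => by
      simp [BExp.subst, BExp.eval, AExp.subst_eval a q v, AExp.subst_eval b q v]
end

mutual
theorem AExp.weaken_subst : ∀ {n : ℕ} (e : AExp n) (q : AExp n), e.weaken.subst q = e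
  | _, .const c, _ => by simp [AExp.map, BExp.map, AExp.eval, BExp.eval, AExp.subst, BExp.subst, AExp.weaken, BExp.weaken, AExp.uses, BExp.uses]
  | _, .var i, q => by simp [AExp.weaken, AExp.subst]
  | _, .add a b, q => by
      simp [AExp.weaken, AExp.subst, AExp.weaken_subst a q, AExp.weaken_subst b q]
  | _, .mul a b, q => by
      simp [AExp.weaken, AExp.subst, AExp.weaken_subst a q, AExp.weaken_subst b q]
  | _, .ite c a b, q => by
      simp [AExp.weaken, AExp.subst, AExp.weaken_subst a q, AExp.weaken_subst b q,
        BExp.weaken_subst c q]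
theorem BExp.weaken_subst : ∀ {n : ℕ} (e : BExp n) (q : AExp n), e.weaken.subst q = e
  | _, .tt, _ => by simp [AExp.map, BExp.map, AExp.eval, BExp.eval, AExp.subst, BExp.subst, AExp.weaken, BExp.weaken, AExp.uses, BExp.uses]
  | _, .not b, q => by simp [BExp.weaken, BExp.subst, BExp.weaken_subst b q]
  | _, .and a b, q => by
      simp [BExp.weaken, BExp.subst, BExp.weaken_subst a q, BExp.weaken_subst b q]
  | _, .le a b, q => by
      simp [BExp.weaken, BExp.subst, AExp.weaken_subst a q, AExp.weaken_subst b q]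
end

mutual
theorem AExp.map_swp_weaken_subst :
    ∀ {n : ℕ} (e : AExp (n + 1)) (q : AExp n),
      ((e.weaken).map (swp n)).subst q.weaken = (e.subst q).weaken
  | _, .const c, _ => by simp [AExp.map, BExp.map, AExp.eval, BExp.eval, AExp.subst, BExp.subst, AExp.weaken, BExp.weaken, AExp.uses, BExp.uses]
  | _, .var i, q => by
      induction i using Fin.lastCases with
      | last => simp [AExp.weaken, AExp.map, AExp.subst]
      | cast j => simp [AExp.weaken, AExp.map, AExp.subst]
  | _, .add a b, q => by
      simp [AExp.weaken, AExp.map, AExp.subst, AExp.map_swp_weaken_subst a q,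
        AExp.map_swp_weaken_subst b q]
  | _, .mul a b, q => by
      simp [AExp.weaken, AExp.map, AExp.subst, AExp.map_swp_weaken_subst a q,
        AExp.map_swp_weaken_subst b q]
  | _, .ite c a b, q => by
      simp [AExp.weaken, AExp.map, AExp.subst, AExp.map_swp_weaken_subst a q,
        AExp.map_swp_weaken_subst b q, BExp.map_swp_weaken_subst c q]
theorem BExp.map_swp_weaken_subst :
    ∀ {n : ℕ} (e : BExp (n + 1)) (q : AExp n),
      ((e.weaken).map (swp n)).subst q.weaken = (e.subst q).weaken
  | _, .tt, _ => by simp [AExp.map, BExp.map, AExp.eval, BExp.eval, AExp.subst, BExp.subst, AExp.weaken, BExp.weaken, AExp.uses, BExp.uses]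
  | _, .not b, q => by
      simp [BExp.weaken, BExp.map, BExp.subst, BExp.map_swp_weaken_subst b q]
  | _, .and a b, q => by
      simp [BExp.weaken, BExp.map, BExp.subst, BExp.map_swp_weaken_subst a q,
        BExp.map_swp_weaken_subst b q]
  | _, .le a b, q => by
      simp [BExp.weaken, BExp.map, BExp.subst, AExp.map_swp_weaken_subst a q,
        AExp.map_swp_weaken_subst b q]
end

mutual
theorem AExp.map_swp_subst_subst :
    ∀ {n : ℕ} (e : AExp (n + 2)) (q : AExp (n + 1)) (c : ℝ),
      ((e.map (swp n)).subst (.const c)).subst (q.subst (.const c))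
        = (e.subst q).subst (.const c)
  | _, .const r, _, _ => by simp [AExp.map, BExp.map, AExp.eval, BExp.eval, AExp.subst, BExp.subst, AExp.weaken, BExp.weaken, AExp.uses, BExp.uses]
  | _, .var i, q, c => by
      induction i using Fin.lastCases with
      | last => simp [AExp.map, AExp.subst]
      | cast j =>
        induction j using Fin.lastCases with
        | last => simp [AExp.map, AExp.subst]
        | cast k => simp [AExp.map, AExp.subst]
  | _, .add a b, q, c => by
      simp [AExp.map, AExp.subst, AExp.map_swp_subst_subst a q c,
        AExp.map_swp_subst_subst b q c]
  | _, .mul a b, q, c => by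
      simp [AExp.map, AExp.subst, AExp.map_swp_subst_subst a q c,
        AExp.map_swp_subst_subst b q c]
  | _, .ite cc a b, q, c => by
      simp [AExp.map, AExp.subst, AExp.map_swp_subst_subst a q c,
        AExp.map_swp_subst_subst b q c, BExp.map_swp_subst_subst cc q c]
theorem BExp.map_swp_subst_subst :
    ∀ {n : ℕ} (e : BExp (n + 2)) (q : AExp (n + 1)) (c : ℝ),
      ((e.map (swp n)).subst (.const c)).subst (q.subst (.const c))
        = (e.subst q).subst (.const c)
  | _, .tt, _, _ => by simp [AExp.map, BExp.map, AExp.eval, BExp.eval, AExp.subst, BExp.subst, AExp.weaken, BExp.weaken, AExp.uses, BExp.uses]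
  | _, .not b, q, c => by simp [BExp.map, BExp.subst, BExp.map_swp_subst_subst b q c]
  | _, .and a b, q, c => by
      simp [BExp.map, BExp.subst, BExp.map_swp_subst_subst a q c,
        BExp.map_swp_subst_subst b q c]
  | _, .le a b, q, c => by
      simp [BExp.map, BExp.subst, AExp.map_swp_subst_subst a q c,
        AExp.map_swp_subst_subst b q c]
end


mutual
theorem AExp.uses_subst : ∀ {n : ℕ} (e : AExp (n + 1)) (q : AExp n) (j : Fin n),
    (e.subst q).uses j ↔ (e.uses j.castSucc ∨ (e.uses (Fin.last n) ∧ q.uses j))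
  | _, .const c, _, _ => by simp [AExp.subst, AExp.uses]
  | _, .var i, q, j => by
      induction i using Fin.lastCases with
      | last => simp [AExp.subst, AExp.uses, (Fin.castSucc_lt_last j).ne']
      | cast k =>
        simp [AExp.subst, AExp.uses, (Fin.castSucc_lt_last k).ne, Fin.castSucc_inj]
  | _, .add a b, q, j => by
      simp only [AExp.subst, AExp.uses, AExp.uses_subst a q j, AExp.uses_subst b q j]
      tauto
  | _, .mul a b, q, j => by
      simp only [AExp.subst, AExp.uses, AExp.uses_subst a q j, AExp.uses_subst b q j]
      tauto
  | _, .ite c a b, q, j => by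
      simp only [AExp.subst, AExp.uses, AExp.uses_subst a q j, AExp.uses_subst b q j,
        BExp.uses_subst c q j]
      tauto
theorem BExp.uses_subst : ∀ {n : ℕ} (e : BExp (n + 1)) (q : AExp n) (j : Fin n),
    (e.subst q).uses j ↔ (e.uses j.castSucc ∨ (e.uses (Fin.last n) ∧ q.uses j))
  | _, .tt, _, _ => by simp [BExp.subst, BExp.uses]
  | _, .not b, q, j => by simp [BExp.subst, BExp.uses, BExp.uses_subst b q j]
  | _, .and a b, q, j => by
      simp only [BExp.subst, BExp.uses, BExp.uses_subst a q j, BExp.uses_subst b q j]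
      tauto
  | _, .le a b, q, j => by
      simp only [BExp.subst, BExp.uses, AExp.uses_subst a q j, AExp.uses_subst b q j]
      tauto
end

mutual
theorem AExp.weaken_uses_last : ∀ {n : ℕ} (e : AExp n), ¬ e.weaken.uses (Fin.last n)
  | _, .const c => by simp [AExp.weaken, AExp.uses]
  | _, .var i => by simp [AExp.weaken, AExp.uses, (Fin.castSucc_lt_last i).ne]
  | _, .add a b => by
      simp [AExp.weaken, AExp.uses, AExp.weaken_uses_last a, AExp.weaken_uses_last b]
  | _, .mul a b => by
      simp [AExp.weaken, AExp.uses, AExp.weaken_uses_last a, AExp.weaken_uses_last b]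
  | _, .ite c a b => by
      simp [AExp.weaken, AExp.uses, AExp.weaken_uses_last a, AExp.weaken_uses_last b,
        BExp.weaken_uses_last c]
theorem BExp.weaken_uses_last : ∀ {n : ℕ} (e : BExp n), ¬ e.weaken.uses (Fin.last n)
  | _, .tt => by simp [BExp.weaken, BExp.uses]
  | _, .not b => by simp [BExp.weaken, BExp.uses, BExp.weaken_uses_last b]
  | _, .and a b => by
      simp [BExp.weaken, BExp.uses, BExp.weaken_uses_last a, BExp.weaken_uses_last b]
  | _, .le a b => by
      simp [BExp.weaken, BExp.uses, AExp.weaken_uses_last a, AExp.weaken_uses_last b]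
end

mutual
theorem AExp.eval_congr : ∀ {n : ℕ} (e : AExp n) (v w : Fin n → ℝ),
    (∀ j, e.uses j → v j = w j) → e.eval v = e.eval w
  | _, .const c, _, _, _ => by simp [AExp.eval]
  | _, .var i, v, w, h => by simp only [AExp.eval]; exact h i (by simp [AExp.uses])
  | _, .add a b, v, w, h => by
      have ha := AExp.eval_congr a v w (fun j hj => h j (by simp [AExp.uses, BExp.uses]; exact Or.inl hj))
      have hb := AExp.eval_congr b v w (fun j hj => h j (by simp [AExp.uses, BExp.uses]; exact Or.inr hj))
      simp [AExp.eval, ha, hb]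
  | _, .mul a b, v, w, h => by
      have ha := AExp.eval_congr a v w (fun j hj => h j (by simp [AExp.uses, BExp.uses]; exact Or.inl hj))
      have hb := AExp.eval_congr b v w (fun j hj => h j (by simp [AExp.uses, BExp.uses]; exact Or.inr hj))
      simp [AExp.eval, ha, hb]
  | _, .ite c a b, v, w, h => by
      have hc := BExp.eval_congr c v w (fun j hj => h j (by simp [AExp.uses, BExp.uses]; exact Or.inl hj))
      have ha := AExp.eval_congr a v w (fun j hj => h j (by simp [AExp.uses, BExp.uses]; exact Or.inr (Or.inl hj)))
      have hb := AExp.eval_congr b v w (fun j hj => h j (by simp [AExp.uses, BExp.uses]; exact Or.inr (Or.inr hj)))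
      simp [AExp.eval, hc, ha, hb]
theorem BExp.eval_congr : ∀ {n : ℕ} (e : BExp n) (v w : Fin n → ℝ),
    (∀ j, e.uses j → v j = w j) → e.eval v = e.eval w
  | _, .tt, _, _, _ => by simp [BExp.eval]
  | _, .not b, v, w, h => by
      have hb := BExp.eval_congr b v w (fun j hj => h j (by simpa [BExp.uses] using hj))
      simp [BExp.eval, hb]
  | _, .and a b, v, w, h => by
      have ha := BExp.eval_congr a v w (fun j hj => h j (by simp [AExp.uses, BExp.uses]; exact Or.inl hj))
      have hb := BExp.eval_congr b v w (fun j hj => h j (by simp [AExp.uses, BExp.uses]; exact Or.inr hj))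
      simp [BExp.eval, ha, hb]
  | _, .le a b, v, w, h => by
      have ha := AExp.eval_congr a v w (fun j hj => h j (by simp [AExp.uses, BExp.uses]; exact Or.inl hj))
      have hb := AExp.eval_congr b v w (fun j hj => h j (by simp [AExp.uses, BExp.uses]; exact Or.inr hj))
      simp [BExp.eval, ha, hb]
end

end SyntacticDummyAux
/-- **Syntactic Dummy**: for a program `p` over variables `𝐗` in which the variable `X`
does not occur, `p` viewed over `𝐗` has proxy use of `Z` iff `p` viewed over `𝐗, X`
has proxy use of `Z`. -/
theorem syntactic_dummy {Ω 𝒵 : Type*} {n : ℕ} (μ : PMF Ω)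
    (X : Fin n → Ω → ℝ) (X' : Ω → ℝ) (Z : Ω → 𝒵) (p : AExp n) :
    ProxyUse μ X p Z ↔ ProxyUse μ (Fin.snoc X X') p.weaken Z := by
  constructor
  · rintro ⟨p₁, p₂, hsub, ⟨x, u₁, u₂, hne⟩, hproxy⟩
    refine ⟨p₁.weaken, (p₂.weaken).map (swp n), ?_, ?_, ?_⟩
    · rw [AExp.map_swp_weaken_subst, hsub]
    · refine ⟨Fin.snoc x 0, u₁, u₂, ?_⟩
      have key : ∀ u : ℝ,
          (AExp.map (swp n) p₂.weaken).eval (Fin.snoc (Fin.snoc x 0) u)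
            = p₂.eval (Fin.snoc x u) := by
        intro u
        rw [AExp.map_eval, AExp.weaken_eval]
        congr 1
        funext i
        induction i using Fin.lastCases with
        | last => simp
        | cast k => simp
      rw [key u₁, key u₂]
      exact hne
    · have hrv : evalRV (Fin.snoc X X') p₁.weaken = evalRV X p₁ := by
        funext ω
        show p₁.weaken.eval _ = _
        rw [AExp.weaken_eval]
        congr 1
        funext i
        simp
      rw [hrv]
      exact hproxy
  · rintro ⟨p₁, p₂, hsub, ⟨x, u₁, u₂, hne⟩, hproxy⟩
    have huseslast : p₂.uses (Fin.last (n + 1)) := by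
      by_contra hnot
      refine hne (AExp.eval_congr p₂ _ _ (fun j hj => ?_))
      induction j using Fin.lastCases with
      | last => exact absurd hj hnot
      | cast k => simp
    have hX' : ¬ (p₂.subst p₁).uses (Fin.last n) := by
      rw [hsub]; exact AExp.weaken_uses_last p
    rw [AExp.uses_subst] at hX'
    have h₂ : ¬ p₂.uses ((Fin.last n).castSucc) := fun hc => hX' (Or.inl hc)
    have h₁ : ¬ p₁.uses (Fin.last n) := fun hc => hX' (Or.inr ⟨huseslast, hc⟩)
    refine ⟨p₁.subst (.const 0), (AExp.map (swp n) p₂).subst (.const 0), ?_, ?_, ?_⟩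
    · rw [AExp.map_swp_subst_subst, hsub, AExp.weaken_subst]
    · refine ⟨fun k => x k.castSucc, u₁, u₂, ?_⟩
      have key : ∀ u : ℝ,
          ((AExp.map (swp n) p₂).subst (.const 0)).eval
              (Fin.snoc (fun k => x k.castSucc) u)
            = p₂.eval (Fin.snoc x u) := by
        intro u
        rw [AExp.subst_eval, AExp.map_eval]
        refine AExp.eval_congr p₂ _ _ (fun j hj => ?_)
        induction j using Fin.lastCases with
        | last => simp
        | cast k =>
          induction k using Fin.lastCases with
          | last => exact absurd hj h₂
          | cast m => simp
      rw [key u₁, key u₂]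
      exact hne
    · have hrv : evalRV X (p₁.subst (.const 0)) = evalRV (Fin.snoc X X') p₁ := by
        funext ω
        show (p₁.subst (.const 0)).eval _ = p₁.eval _
        rw [AExp.subst_eval]
        refine AExp.eval_congr p₁ _ _ (fun j hj => ?_)
        induction j using Fin.lastCases with
        | last => exact absurd hj h₁
        | cast k => simp
      rw [hrv]
      exact hproxy

end UsePrivacy
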